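/- Let T be a well-formed decision tree with classifier κ_T, and let v ∈ 𝔽 with κ_T(v) = c. For every weak CXp Y ⊆ F, there exists a root-to-leaf path P of T whose leaf class is different from c such that Free(P) ⊆ Y. -/
import Mathlib


/-- A (multi-valued, univariate) decision tree over `m` features with domains
`D i` and classes `K`: a leaf carries a class, and an internal node carries a
tested feature `i` together with a finite nonempty family of children (indexed
by `Fin (n+1)`), each child labeled with a subset of `D i`. -/
inductive DTree (m : ℕ) (D : Fin m → Type) (K : Type) : Type where
  | leaf : K → DTree m D K
  | node : (i : Fin m) → (n : ℕ) → (Fin (n + 1) → Set (D i)) →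
      (Fin (n + 1) → DTree m D K) → DTree m D K

namespace DTree

variable {m : ℕ} {D : Fin m → Type} {K : Type}

/-- `PathTo T p c` holds when `p` is the list of edges (each recording the
tested feature and the edge's label) of a root-to-leaf path of `T` whose leaf
carries class `c`. -/
inductive PathTo : DTree m D K → List (Σ i : Fin m, Set (D i)) → K → Prop where
  | leaf (c : K) : PathTo (.leaf c) [] c
  | node {i : Fin m} {n : ℕ} {lab : Fin (n + 1) → Set (D i)}
      {ch : Fin (n + 1) → DTree m D K} (k : Fin (n + 1))
      {p : List (Σ i : Fin m, Set (D i))} {c : K} :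
      PathTo (ch k) p c → PathTo (.node i n lab ch) (⟨i, lab k⟩ :: p) c

/-- A path `p` is consistent with a point `x` of feature space if `x i ∈ E`
for every edge of `p` testing feature `i` with label `E`. -/
def Consistent (x : ∀ i, D i) (p : List (Σ i : Fin m, Set (D i))) : Prop :=
  ∀ e ∈ p, x e.1 ∈ e.2

/-- At every internal node, the children's labels are pairwise disjoint and
their union is the whole domain of the tested feature. -/
inductive Partitioned : DTree m D K → Prop where
  | leaf (c : K) : Partitioned (.leaf c)
  | node {i : Fin m} {n : ℕ} {lab : Fin (n + 1) → Set (D i)}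
      {ch : Fin (n + 1) → DTree m D K} :
      (∀ k k' : Fin (n + 1), k ≠ k' → lab k ∩ lab k' = ∅) →
      (∀ d : D i, ∃ k : Fin (n + 1), d ∈ lab k) →
      (∀ k : Fin (n + 1), Partitioned (ch k)) →
      Partitioned (.node i n lab ch)

/-- No root-to-leaf path of `T` is inconsistent: along every root-to-leaf
path, for every feature `i`, the intersection of the labels of the edges
testing `i` on that path is nonempty. -/
def NoInconsistentPath (T : DTree m D K) : Prop :=
  ∀ (p : List (Σ i : Fin m, Set (D i))) (c : K), T.PathTo p c →
    ∀ i : Fin m, ∃ d : D i,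
      ∀ E : Set (D i), (⟨i, E⟩ : Σ j : Fin m, Set (D j)) ∈ p → d ∈ E

/-- A decision tree is well-formed if every node's children's labels partition
the tested feature's domain and no root-to-leaf path is inconsistent. -/
def WellFormed (T : DTree m D K) : Prop := T.Partitioned ∧ T.NoInconsistentPath

/-- `Free v p` is the set of features `i` such that some edge of `p` tests `i`
with a label `E` with `v i ∉ E`. -/
def Free (v : ∀ i, D i) (p : List (Σ i : Fin m, Set (D i))) : Set (Fin m) :=
  {i | ∃ E : Set (D i), (⟨i, E⟩ : Σ j : Fin m, Set (D j)) ∈ p ∧ v i ∉ E}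

end DTree

/-- `X` is a weak abductive explanation (weak AXp) for classifier `κ` at point
`v`. -/
def WeakAXp {m : ℕ} {D : Fin m → Type} {K : Type} (κ : (∀ i, D i) → K)
    (v : ∀ i, D i) (X : Set (Fin m)) : Prop :=
  ∀ x : ∀ i, D i, (∀ i ∈ X, x i = v i) → κ x = κ v

/-- `Y` is a weak contrastive explanation (weak CXp) for `κ` at `v`. -/
def WeakCXp {m : ℕ} {D : Fin m → Type} {K : Type} (κ : (∀ i, D i) → K)
    (v : ∀ i, D i) (Y : Set (Fin m)) : Prop :=
  ∃ x : ∀ i, D i, (∀ j ∉ Y, x j = v j) ∧ κ x ≠ κ v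

/-- An AXp is a subset-inclusion-minimal weak AXp. -/
def AXp {m : ℕ} {D : Fin m → Type} {K : Type} (κ : (∀ i, D i) → K)
    (v : ∀ i, D i) (X : Set (Fin m)) : Prop :=
  WeakAXp κ v X ∧ ∀ X' : Set (Fin m), X' ⊂ X → ¬ WeakAXp κ v X'

/-- A CXp is a subset-inclusion-minimal weak CXp. -/
def CXp {m : ℕ} {D : Fin m → Type} {K : Type} (κ : (∀ i, D i) → K)
    (v : ∀ i, D i) (Y : Set (Fin m)) : Prop :=
  WeakCXp κ v Y ∧ ∀ Y' : Set (Fin m), Y' ⊂ Y → ¬ WeakCXp κ v Y'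

lemma exists_consistent_path {m : ℕ} {D : Fin m → Type} {K : Type}
    (T : DTree m D K) (hT : T.Partitioned) (x : ∀ i, D i) :
    ∃ p c, T.PathTo p c ∧ DTree.Consistent x p := by
  induction T with
  | leaf c => exact ⟨[], c, .leaf c, fun e he => by simp at he⟩
  | node i n lab ch ih =>
    cases hT with
    | node hdisj hcov hch =>
      obtain ⟨k, hk⟩ := hcov (x i)
      obtain ⟨p, c, hp, hcons⟩ := ih k (hch k)
      refine ⟨⟨i, lab k⟩ :: p, c, .node k hp, ?_⟩
      intro e he
      rcases List.mem_cons.mp he with h | h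
      · subst h; exact hk
      · exact hcons e h

/-- For a well-formed decision tree `T` with classifier `κ` and instance `v`
(with prediction `κ v`), every weak CXp `Y` contains `Free v p` for some
root-to-leaf path `p` of `T` whose leaf class differs from `κ v`. -/
theorem weakCXp_contains_free_of_path {m : ℕ} {D : Fin m → Type} {K : Type}
    [∀ i, Nonempty (D i)]
    (T : DTree m D K) (hT : T.WellFormed) (κ : (∀ i, D i) → K)
    (hκ : ∀ (x : ∀ i, D i) (p : List (Σ i : Fin m, Set (D i))) (c : K),
      T.PathTo p c → DTree.Consistent x p → κ x = c)
    (v : ∀ i, D i) (Y : Set (Fin m)) (hY : WeakCXp κ v Y) :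
    ∃ (p : List (Σ i : Fin m, Set (D i))) (c' : K),
      T.PathTo p c' ∧ c' ≠ κ v ∧ DTree.Free v p ⊆ Y := by
  obtain ⟨x, hx, hne⟩ := hY
  obtain ⟨p, c', hp, hcons⟩ := exists_consistent_path T hT.1 x
  have hxc : κ x = c' := hκ x p c' hp hcons
  refine ⟨p, c', hp, hxc ▸ hne, ?_⟩
  intro i hi
  obtain ⟨E, hE, hvE⟩ := hi
  by_contra hiY
  have := hcons ⟨i, E⟩ hE
  rw [hx i hiY] at this
  exact hvE this
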